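/- Let d ≥ 2, let ρ be a density matrix on ℂ^d ⊗ ℂ^d, and let Φ ∈ ℂ^d ⊗ ℂ^d be a unit vector with P_0 Φ = Φ and |⟨e_j ⊗ e_j, Φ⟩|² = 1/d for every j ∈ Fin d (a maximally entangled vector in the decoherence-free subspace). If K(ρ) = Φ Φ†, then ρ = Φ Φ†. -/

import Mathlib

open Matrix Kronecker BigOperators Complex
open scoped ComplexOrder

noncomputable def Emat (d : ℕ) (j i : Fin d) : Matrix (Fin d) (Fin d) ℂ :=
  Matrix.single j i 1

noncomputable def P0 (d : ℕ) : Matrix (Fin d × Fin d) (Fin d × Fin d) ℂ :=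
  ∑ j : Fin d, Emat d j j ⊗ₖ Emat d j j

noncomputable def Sop (d : ℕ) [NeZero d] (idx : Fin d → Fin d) :
    Matrix (Fin d × Fin d) (Fin d × Fin d) ℂ :=
  ∑ j : Fin d,
    (((List.finRange d).map (fun k => Emat d (j + k) (idx (j + k)))).prod) ⊗ₖ Emat d j j

/-- The channel `K(ρ) = P₀ ρ P₀ + Σ_j Σ_{l≠j} ρ((l,j),(l,j)) |jj⟩⟨jj|`. -/
noncomputable def Kch (d : ℕ) (ρ : Matrix (Fin d × Fin d) (Fin d × Fin d) ℂ) :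
    Matrix (Fin d × Fin d) (Fin d × Fin d) ℂ :=
  P0 d * ρ * P0 d +
    ∑ j : Fin d, ∑ l ∈ Finset.univ.filter (fun l : Fin d => l ≠ j),
      ρ (l, j) (l, j) • (Emat d j j ⊗ₖ Emat d j j)

/-- Standard basis vector `e_j` of `ℂ^d`. -/
noncomputable def eVec (d : ℕ) (j : Fin d) : Fin d → ℂ := fun i => if i = j then 1 else 0

/-- The vector `e_j ⊗ e_j ∈ ℂ^d ⊗ ℂ^d`. -/
noncomputable def ejj (d : ℕ) (j : Fin d) : Fin d × Fin d → ℂ :=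
  fun p => eVec d j p.1 * eVec d j p.2

/-- The encoded state `ρ_x = Σ_i (A_{x,i} ⊗ I) ρ* (A_{x,i} ⊗ I)†`. -/
noncomputable def encode (d D m : ℕ) (A : Fin d → Fin m → Matrix (Fin d) (Fin D) ℂ)
    (ρ : Matrix (Fin D × Fin d) (Fin D × Fin d) ℂ) (x : Fin d) :
    Matrix (Fin d × Fin d) (Fin d × Fin d) ℂ :=
  ∑ i : Fin m, (A x i ⊗ₖ (1 : Matrix (Fin d) (Fin d) ℂ)) * ρ *
    (A x i ⊗ₖ (1 : Matrix (Fin d) (Fin d) ℂ))ᴴ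

/-! For `w := e_jj - conj(Φ_jj) Φ`, which is orthogonal to `Φ`, the quadratic form of
`K(ρ) = ΦΦ†` vanishes at `w`. Now `K(ρ)` is the sum of the positive semidefinite compression
`P₀ρP₀` and a diagonal term with entries `c_j = Σ_{l≠j} ρ((l,j),(l,j)) ≥ 0`, so that term
annihilates `w`; its `(j,j)` entry gives `c_j (1 - |Φ_jj|²) = 0`, and `|Φ_jj|² = 1/d ≠ 1`
forces `c_j = 0`. Positivity of `ρ` then kills every row and column indexed by `(l,j)` with
`l ≠ j`, hence `P₀ρP₀ = ρ` and `ρ = K(ρ) = ΦΦ†`. -/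

namespace Matrix.PosSemidef

variable {n 𝕜 : Type*} [Fintype n] [RCLike 𝕜] {A B : Matrix n n 𝕜}

theorem apply_eq_zero_of_diag_eq_zero_right [DecidableEq n] (hA : A.PosSemidef) {p : n}
    (hp : A p p = 0) (q : n) : A q p = 0 := by
  have h := (hA.dotProduct_mulVec_zero_iff (Pi.single p 1)).mp (by simp [Pi.star_single, hp])
  simpa using congrFun h q

theorem apply_eq_zero_of_diag_eq_zero_left [DecidableEq n] (hA : A.PosSemidef) {p : n}
    (hp : A p p = 0) (q : n) : A p q = 0 := by
  rw [← hA.isHermitian.apply, hA.apply_eq_zero_of_diag_eq_zero_right hp, star_zero]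

theorem diagonal_indicator_mul_mul_diagonal_indicator [DecidableEq n] (hA : A.PosSemidef)
    (P : n → Prop) [DecidablePred P] (h : ∀ p, ¬ P p → A p p = 0) :
    diagonal (fun p => if P p then 1 else 0) * A * diagonal (fun p => if P p then 1 else 0)
      = A := by
  ext p q
  by_cases hp : P p
  · by_cases hq : P q
    · simp [hp, hq]
    · simp [hq, hA.apply_eq_zero_of_diag_eq_zero_right (h q hq)]
  · simp [hp, hA.apply_eq_zero_of_diag_eq_zero_left (h p hp)]

theorem mulVec_eq_zero_of_add_eq_vecMulVec (hA : A.PosSemidef) (hB : B.PosSemidef)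
    {Φ w : n → 𝕜} (hAB : A + B = vecMulVec Φ (star Φ)) (hw : star Φ ⬝ᵥ w = 0) :
    B *ᵥ w = 0 := by
  have hsum : star w ⬝ᵥ A *ᵥ w + star w ⬝ᵥ B *ᵥ w = 0 := by
    rw [← dotProduct_add, ← add_mulVec, hAB, vecMulVec_mulVec, hw]
    simp
  rw [← hB.dotProduct_mulVec_zero_iff]
  exact ((add_eq_zero_iff_of_nonneg (hA.dotProduct_mulVec_nonneg w)
    (hB.dotProduct_mulVec_nonneg w)).mp hsum).2

end Matrix.PosSemidef

theorem Matrix.sum_single_diag_pair_eq_diagonal {m α : Type*} [Fintype m] [DecidableEq m]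
    [AddCommMonoid α] (f : m → α) :
    ∑ j, single (j, j) (j, j) (f j) =
      diagonal (fun p : m × m => if p.1 = p.2 then f p.2 else 0) := by
  rw [← sum_single_eq_diagonal, Fintype.sum_prod_type]
  refine Finset.sum_congr rfl fun j _ => ?_
  rw [Finset.sum_eq_single j] <;> simp +contextual [eq_comm]

theorem Emat_kronecker_Emat (d : ℕ) (i j k l : Fin d) :
    Emat d i j ⊗ₖ Emat d k l = single (i, k) (j, l) 1 := by
  rw [Emat, Emat, single_kronecker_single, mul_one]

theorem P0_eq_diagonal (d : ℕ) :
    P0 d = diagonal (fun p : Fin d × Fin d => if p.1 = p.2 then 1 else 0) := by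
  simp only [P0, Emat_kronecker_Emat, sum_single_diag_pair_eq_diagonal]

theorem P0_conjTranspose (d : ℕ) : (P0 d)ᴴ = P0 d := by
  rw [P0_eq_diagonal, diagonal_conjTranspose]
  congr 1
  ext p
  split_ifs <;> simp_all

theorem ejj_eq_single (d : ℕ) (j : Fin d) : ejj d j = Pi.single (j, j) 1 := by
  ext ⟨a, b⟩
  by_cases ha : a = j <;> by_cases hb : b = j <;> simp [ejj, eVec, ha, hb]

theorem star_ejj_dotProduct (d : ℕ) (j : Fin d) (Φ : Fin d × Fin d → ℂ) :
    star (ejj d j) ⬝ᵥ Φ = Φ (j, j) := by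
  rw [ejj_eq_single, Pi.star_single, star_one, single_dotProduct, one_mul]

def leakage (d : ℕ) (ρ : Matrix (Fin d × Fin d) (Fin d × Fin d) ℂ) (j : Fin d) : ℂ :=
  ∑ l ∈ Finset.univ.filter (fun l : Fin d => l ≠ j), ρ (l, j) (l, j)

theorem Kch_eq_add_diagonal (d : ℕ) (ρ : Matrix (Fin d × Fin d) (Fin d × Fin d) ℂ) :
    Kch d ρ = P0 d * ρ * P0 d +
      diagonal (fun p : Fin d × Fin d => if p.1 = p.2 then leakage d ρ p.2 else 0) := by
  rw [Kch, ← sum_single_diag_pair_eq_diagonal]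
  congr 1
  refine Finset.sum_congr rfl fun j _ => ?_
  rw [← Finset.sum_smul, Emat_kronecker_Emat, smul_single, smul_eq_mul, mul_one, leakage]

section Leakage

variable {d : ℕ} {ρ : Matrix (Fin d × Fin d) (Fin d × Fin d) ℂ}

theorem leakage_nonneg (hρ : ρ.PosSemidef) (j : Fin d) : 0 ≤ leakage d ρ j :=
  Finset.sum_nonneg fun _ _ => hρ.diag_nonneg

theorem apply_eq_zero_of_leakage_eq_zero (hρ : ρ.PosSemidef) {j : Fin d}
    (hj : leakage d ρ j = 0) {l : Fin d} (hlj : l ≠ j) : ρ (l, j) (l, j) = 0 :=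
  (Finset.sum_eq_zero_iff_of_nonneg fun _ _ => hρ.diag_nonneg).mp hj l (by simpa using hlj)

theorem leakage_eq_zero_of_Kch_eq_vecMulVec (hρ : ρ.PosSemidef) {Φ : Fin d × Fin d → ℂ}
    (hΦ : star Φ ⬝ᵥ Φ = 1) (hK : Kch d ρ = vecMulVec Φ (star Φ)) {j : Fin d}
    (hj : ‖Φ (j, j)‖ ^ 2 ≠ 1) : leakage d ρ j = 0 := by
  set w : Fin d × Fin d → ℂ := Pi.single (j, j) 1 - star (Φ (j, j)) • Φ
  have hw : star Φ ⬝ᵥ w = 0 := by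
    simp [w, dotProduct_sub, dotProduct_smul, hΦ]
  have hwjj : w (j, j) ≠ 0 := by
    have hwjj_eq : w (j, j) = 1 - (‖Φ (j, j)‖ ^ 2 : ℝ) := by
      simp [w, ← Complex.conj_mul']
    rw [hwjj_eq, sub_ne_zero]
    exact_mod_cast hj.symm
  have hcompressed : (P0 d * ρ * P0 d).PosSemidef := by
    simpa only [P0_conjTranspose] using hρ.mul_mul_conjTranspose_same (P0 d)
  have hdiag : (diagonal fun p : Fin d × Fin d =>
      if p.1 = p.2 then leakage d ρ p.2 else 0).PosSemidef :=
    PosSemidef.diagonal fun p => by split_ifs <;> simp [leakage_nonneg hρ]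
  have h := congrFun (hcompressed.mulVec_eq_zero_of_add_eq_vecMulVec hdiag
    ((Kch_eq_add_diagonal d ρ).symm.trans hK) hw) (j, j)
  simpa [mulVec_diagonal, hwjj] using h

theorem Kch_eq_self (hρ : ρ.PosSemidef) (h : ∀ j, leakage d ρ j = 0) : Kch d ρ = ρ := by
  simp only [Kch_eq_add_diagonal, h, ite_self, diagonal_zero, add_zero, P0_eq_diagonal]
  exact hρ.diagonal_indicator_mul_mul_diagonal_indicator _
    fun p hp => apply_eq_zero_of_leakage_eq_zero hρ (h p.2) hp

end Leakage

theorem stmt_8_general (d : ℕ) (hd : 2 ≤ d)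
    (ρ : Matrix (Fin d × Fin d) (Fin d × Fin d) ℂ)
    (hpos : ρ.PosSemidef)
    (Φ : Fin d × Fin d → ℂ)
    (hunit : star Φ ⬝ᵥ Φ = 1)
    (hmax : ∀ j : Fin d, ‖star (ejj d j) ⬝ᵥ Φ‖ ^ 2 = 1 / (d : ℝ))
    (hK : Kch d ρ = vecMulVec Φ (star Φ)) :
    ρ = vecMulVec Φ (star Φ) := by
  have hnorm : ∀ j : Fin d, ‖Φ (j, j)‖ ^ 2 ≠ 1 := by
    intro j
    rw [← star_ejj_dotProduct d j Φ, hmax j, Ne, div_eq_one_iff_eq (by positivity)]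
    exact_mod_cast (by omega : 1 ≠ d)
  rw [← hK, Kch_eq_self hpos fun j => leakage_eq_zero_of_Kch_eq_vecMulVec hpos hunit hK (hnorm j)]

/-- if `K(ρ) = ΦΦ†` for a maximally entangled `Φ` in the decoherence-free
subspace, then `ρ = ΦΦ†`. -/
theorem stmt_8 (d : ℕ) [NeZero d] (hd : 2 ≤ d)
    (ρ : Matrix (Fin d × Fin d) (Fin d × Fin d) ℂ)
    (hpos : ρ.PosSemidef) (htr : ρ.trace = 1)
    (Φ : Fin d × Fin d → ℂ)
    (hunit : star Φ ⬝ᵥ Φ = 1)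
    (hspan : (P0 d).mulVec Φ = Φ)
    (hmax : ∀ j : Fin d, ‖star (ejj d j) ⬝ᵥ Φ‖ ^ 2 = 1 / (d : ℝ))
    (hK : Kch d ρ = vecMulVec Φ (star Φ)) :
    ρ = vecMulVec Φ (star Φ) :=
  stmt_8_general d hd ρ hpos Φ hunit hmax hK
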